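/- For each i ∈ ℕ and each level i, the relation ≤ᵏᵢ on words (defined by: every Σᵢ first-order sentence of quantifier rank at most k satisfied by w is satisfied by w') is a preorder compatible with concatenation: if w₁ ≤ᵏᵢ w₂ and w₁' ≤ᵏᵢ w₂' then w₁w₁' ≤ᵏᵢ w₂w₂'. -/

import Mathlib

/-- First-order formulas over words on alphabet `A`, with de Bruijn indexed
variables, unary letter predicates `P_a x` and the order predicate `x < y`. -/
inductive FO (A : Type) : Type
  | letter : A → ℕ → FO A
  | lt : ℕ → ℕ → FO A
  | not : FO A → FO A
  | and : FO A → FO A → FO A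
  | or : FO A → FO A → FO A
  | ex : FO A → FO A
  | all : FO A → FO A

namespace FO

variable {A : Type}

/-- Satisfaction of a formula in a word `w` under an assignment `v` of
variables to positions; quantifiers range over the positions of `w`,
`letter a x` holds when position `v x` carries the letter `a`. -/
def Sat (w : List A) : (ℕ → ℕ) → FO A → Prop
  | v, letter a x => w[(v x)]? = some a
  | v, lt x y => v x < v y ∧ v y < w.length
  | v, not φ => ¬ Sat w v φ
  | v, and φ ψ => Sat w v φ ∧ Sat w v ψ
  | v, or φ ψ => Sat w v φ ∨ Sat w v ψ
  | v, ex φ => ∃ p < w.length, Sat w (fun n => Nat.casesOn n p v) φ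
  | v, all φ => ∀ p < w.length, Sat w (fun n => Nat.casesOn n p v) φ

/-- Quantifier rank of a formula. -/
def qr : FO A → ℕ
  | letter _ _ => 0
  | lt _ _ => 0
  | not φ => qr φ
  | and φ ψ => max (qr φ) (qr ψ)
  | or φ ψ => max (qr φ) (qr ψ)
  | ex φ => qr φ + 1
  | all φ => qr φ + 1

/-- A bound on free (de Bruijn) variables: all free variables are `< fvBound φ`. -/
def fvBound : FO A → ℕ
  | letter _ x => x + 1
  | lt x y => max x y + 1
  | not φ => fvBound φ
  | and φ ψ => max (fvBound φ) (fvBound ψ)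
  | or φ ψ => max (fvBound φ) (fvBound ψ)
  | ex φ => fvBound φ - 1
  | all φ => fvBound φ - 1

/-- A sentence is a formula with no free variables. -/
def IsSentence (φ : FO A) : Prop := fvBound φ = 0

/-- Quantifier-free formulas. -/
def QF : FO A → Prop
  | letter _ _ => True
  | lt _ _ => True
  | not φ => QF φ
  | and φ ψ => QF φ ∧ QF ψ
  | or φ ψ => QF φ ∧ QF ψ
  | ex _ => False
  | all _ => False

mutual
  /-- `Σᵢ` formulas: quantifier-free formulas, positive boolean combinations,
  existential quantification over `Σᵢ` (for `i ≥ 1`), and every `Πᵢ` formula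
  is `Σ_{i+1}`; this captures formulas whose prenex normal form has at most
  `i` quantifier blocks starting with an existential block. -/
  inductive IsSigma : ℕ → FO A → Prop
    | of_qf {i : ℕ} {φ : FO A} : QF φ → IsSigma i φ
    | of_pi {i : ℕ} {φ : FO A} : IsPi i φ → IsSigma (i + 1) φ
    | and {i : ℕ} {φ ψ : FO A} : IsSigma i φ → IsSigma i ψ → IsSigma i (FO.and φ ψ)
    | or {i : ℕ} {φ ψ : FO A} : IsSigma i φ → IsSigma i ψ → IsSigma i (FO.or φ ψ)
    | ex {i : ℕ} {φ : FO A} : IsSigma (i + 1) φ → IsSigma (i + 1) (FO.ex φ)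
  /-- `Πᵢ` formulas, dual to `Σᵢ`. -/
  inductive IsPi : ℕ → FO A → Prop
    | of_qf {i : ℕ} {φ : FO A} : QF φ → IsPi i φ
    | of_sigma {i : ℕ} {φ : FO A} : IsSigma i φ → IsPi (i + 1) φ
    | and {i : ℕ} {φ ψ : FO A} : IsPi i φ → IsPi i ψ → IsPi i (FO.and φ ψ)
    | or {i : ℕ} {φ ψ : FO A} : IsPi i φ → IsPi i ψ → IsPi i (FO.or φ ψ)
    | all {i : ℕ} {φ : FO A} : IsPi (i + 1) φ → IsPi (i + 1) (FO.all φ)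
end

/-- The preorder `w ≤ᵏᵢ w'`: every `Σᵢ` sentence of quantifier rank at most
`k` satisfied by `w` is satisfied by `w'`. -/
def sle (i k : ℕ) (w w' : List A) : Prop :=
  ∀ φ : FO A, IsSigma i φ → qr φ ≤ k → IsSentence φ →
    Sat w (fun _ => 0) φ → Sat w' (fun _ => 0) φ

end FO

/-!
Reflexivity and transitivity are immediate; compatibility with concatenation rests on a
Feferman–Vaught decomposition. Distribute the free variables of a `Σᵢ` (or `Πᵢ`) formula `φ`
between the two factors of `u ++ v`. Then `φ` is equivalent on `u ++ v` to a finite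
disjunction of conjunctions `α ∧ β`, with `α` read on `u`, `β` read on `v`, and both again
`Σᵢ` (resp. `Πᵢ`) of quantifier rank at most that of `φ`. For a quantifier, the range of the
bound variable is split between the two factors: `∃ x` distributes over the disjunction, while
`∀ x` applied to `⋁ⱼ (αⱼ ∧ βⱼ)`, where `x` occurs only in the `αⱼ`, becomes
`⋁_S ((∀ x, ⋁_{j ∈ S} αⱼ) ∧ ⋀_{j ∈ S} βⱼ)` over all sets `S` of indices. For a sentence
the `α`s and `β`s are sentences, so `w₁ ≤ w₂` and `w₁' ≤ w₂'` transfer them one by one.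
-/

namespace FO

variable {A : Type}

def cons {α : Type} (a : α) (f : ℕ → α) : ℕ → α := fun n => Nat.casesOn n a f

section Semantics

variable {w : List A} {v : ℕ → ℕ}

@[simp] lemma sat_letter {a : A} {x : ℕ} : Sat w v (letter a x) ↔ w[v x]? = some a := Iff.rfl

@[simp] lemma sat_lt {x y : ℕ} : Sat w v (lt x y) ↔ v x < v y ∧ v y < w.length := Iff.rfl

@[simp] lemma sat_not {φ : FO A} : Sat w v φ.not ↔ ¬ Sat w v φ := Iff.rfl

@[simp] lemma sat_and {φ ψ : FO A} : Sat w v (φ.and ψ) ↔ Sat w v φ ∧ Sat w v ψ := Iff.rfl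

@[simp] lemma sat_or {φ ψ : FO A} : Sat w v (φ.or ψ) ↔ Sat w v φ ∨ Sat w v ψ := Iff.rfl

@[simp] lemma sat_ex {φ : FO A} : Sat w v φ.ex ↔ ∃ p < w.length, Sat w (cons p v) φ := Iff.rfl

@[simp] lemma sat_all {φ : FO A} : Sat w v φ.all ↔ ∀ p < w.length, Sat w (cons p v) φ :=
  Iff.rfl

end Semantics

def FreeVar : FO A → ℕ → Prop
  | letter _ x, n => n = x
  | lt x y, n => n = x ∨ n = y
  | not φ, n => FreeVar φ n
  | and φ ψ, n => FreeVar φ n ∨ FreeVar ψ n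
  | or φ ψ, n => FreeVar φ n ∨ FreeVar ψ n
  | ex φ, n => FreeVar φ (n + 1)
  | all φ, n => FreeVar φ (n + 1)

lemma fvBound_le_iff {φ : FO A} {m : ℕ} : fvBound φ ≤ m ↔ ∀ n, FreeVar φ n → n < m := by
  induction φ generalizing m with
  | letter a x => simp [fvBound, FreeVar]
  | lt x y => simp only [fvBound, FreeVar]; grind
  | not φ ih => exact ih
  | and φ ψ ih₁ ih₂ | or φ ψ ih₁ ih₂ =>
    simp only [fvBound, FreeVar, max_le_iff, ih₁, ih₂]; grind
  | ex φ ih | all φ ih =>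
    simp only [fvBound, FreeVar, Nat.sub_le_iff_le_add, ih]
    constructor
    · intro h n hn; have := h (n + 1) hn; omega
    · rintro h (_ | n) hn
      · omega
      · have := h n hn; omega

lemma isSentence_iff {φ : FO A} : IsSentence φ ↔ ∀ n, ¬ FreeVar φ n := by
  rw [IsSentence, ← Nat.le_zero, fvBound_le_iff]
  simp only [Nat.not_lt_zero, imp_false]

def lift (f : ℕ → ℕ) : ℕ → ℕ := cons 0 (Nat.succ ∘ f)

def rename (f : ℕ → ℕ) : FO A → FO A
  | letter a x => letter a (f x)
  | lt x y => lt (f x) (f y)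
  | not φ => not (rename f φ)
  | and φ ψ => and (rename f φ) (rename f ψ)
  | or φ ψ => or (rename f φ) (rename f ψ)
  | ex φ => ex (rename (lift f) φ)
  | all φ => all (rename (lift f) φ)

lemma cons_comp_lift (p : ℕ) (v f : ℕ → ℕ) : cons p v ∘ lift f = cons p (v ∘ f) := by
  funext n; cases n <;> rfl

lemma sat_rename {w : List A} {φ : FO A} {v f : ℕ → ℕ} :
    Sat w v (φ.rename f) ↔ Sat w (v ∘ f) φ := by
  induction φ generalizing v f <;> simp [rename, cons_comp_lift, *]

lemma qr_rename {φ : FO A} {f : ℕ → ℕ} : qr (φ.rename f) = qr φ := by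
  induction φ generalizing f <;> simp [rename, qr, *]

lemma freeVar_rename {φ : FO A} {f : ℕ → ℕ} {n : ℕ} (h : FreeVar (φ.rename f) n) :
    ∃ m, FreeVar φ m ∧ f m = n := by
  induction φ generalizing f n with
  | letter a x => exact ⟨x, rfl, h.symm⟩
  | lt x y => rcases h with rfl | rfl; exacts [⟨x, .inl rfl, rfl⟩, ⟨y, .inr rfl, rfl⟩]
  | not φ ih => exact ih h
  | and φ ψ ih₁ ih₂ | or φ ψ ih₁ ih₂ =>
    rcases h with h | h
    · obtain ⟨m, hm, rfl⟩ := ih₁ h; exact ⟨m, .inl hm, rfl⟩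
    · obtain ⟨m, hm, rfl⟩ := ih₂ h; exact ⟨m, .inr hm, rfl⟩
  | ex φ ih | all φ ih =>
    obtain ⟨_ | m, hm, hfm⟩ := ih h
    · exact absurd hfm (Nat.zero_ne_add_one n)
    · exact ⟨m, hm, Nat.succ_injective hfm⟩

lemma QF.rename {φ : FO A} (h : QF φ) (f : ℕ → ℕ) : QF (φ.rename f) := by
  induction φ generalizing f with
  | letter | lt => trivial
  | not φ ih => exact ih h f
  | and φ ψ ih₁ ih₂ | or φ ψ ih₁ ih₂ => exact ⟨ih₁ h.1 f, ih₂ h.2 f⟩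
  | ex | all => exact h.elim

mutual

lemma IsSigma.rename {i : ℕ} {φ : FO A} (h : IsSigma i φ) (f : ℕ → ℕ) :
    IsSigma i (φ.rename f) :=
  match h with
  | .of_qf h => .of_qf (h.rename f)
  | .of_pi h => .of_pi (h.rename f)
  | .and h₁ h₂ => .and (h₁.rename f) (h₂.rename f)
  | .or h₁ h₂ => .or (h₁.rename f) (h₂.rename f)
  | .ex h => .ex (h.rename (lift f))

lemma IsPi.rename {i : ℕ} {φ : FO A} (h : IsPi i φ) (f : ℕ → ℕ) : IsPi i (φ.rename f) :=
  match h with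
  | .of_qf h => .of_qf (h.rename f)
  | .of_sigma h => .of_sigma (h.rename f)
  | .and h₁ h₂ => .and (h₁.rename f) (h₂.rename f)
  | .or h₁ h₂ => .or (h₁.rename f) (h₂.rename f)
  | .all h => .all (h.rename (lift f))

end

-- There is no quantifier-free sentence: `falsum` and `verum` mention variable `0`, so `conj` and
-- `disj` are only ever used directly under a binder.
def falsum : FO A := lt 0 0

def verum : FO A := not falsum

def conj (l : List (FO A)) : FO A := l.foldr and verum

def disj (l : List (FO A)) : FO A := l.foldr or falsum

@[simp] lemma sat_conj {w : List A} {v : ℕ → ℕ} {l : List (FO A)} :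
    Sat w v (conj l) ↔ ∀ α ∈ l, Sat w v α := by
  induction l <;> simp_all [conj, verum, falsum]

@[simp] lemma sat_disj {w : List A} {v : ℕ → ℕ} {l : List (FO A)} :
    Sat w v (disj l) ↔ ∃ α ∈ l, Sat w v α := by
  induction l <;> simp_all [disj, falsum]

lemma qr_conj_le {l : List (FO A)} {q : ℕ} (h : ∀ α ∈ l, qr α ≤ q) : qr (conj l) ≤ q := by
  induction l <;> simp_all [conj, verum, falsum, qr]

lemma qr_disj_le {l : List (FO A)} {q : ℕ} (h : ∀ α ∈ l, qr α ≤ q) : qr (disj l) ≤ q := by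
  induction l <;> simp_all [disj, falsum, qr]

lemma freeVar_conj {l : List (FO A)} {n : ℕ} (h : FreeVar (conj l) n) :
    n = 0 ∨ ∃ α ∈ l, FreeVar α n := by
  induction l with
  | nil => simpa [conj, verum, falsum, FreeVar] using h
  | cons α l ih =>
    rcases h with h | h
    · exact .inr ⟨α, List.mem_cons_self, h⟩
    · exact (ih h).imp_right fun ⟨β, hβ, hβn⟩ => ⟨β, List.mem_cons_of_mem _ hβ, hβn⟩

lemma freeVar_disj {l : List (FO A)} {n : ℕ} (h : FreeVar (disj l) n) :
    n = 0 ∨ ∃ α ∈ l, FreeVar α n := by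
  induction l with
  | nil => simpa [disj, falsum, FreeVar] using h
  | cons α l ih =>
    rcases h with h | h
    · exact .inr ⟨α, List.mem_cons_self, h⟩
    · exact (ih h).imp_right fun ⟨β, hβ, hβn⟩ => ⟨β, List.mem_cons_of_mem _ hβ, hβn⟩

structure IsFragment (C : FO A → Prop) : Prop where
  of_qf {φ : FO A} : QF φ → C φ
  and {φ ψ : FO A} : C φ → C ψ → C (φ.and ψ)
  or {φ ψ : FO A} : C φ → C ψ → C (φ.or ψ)
  rename {φ : FO A} (f : ℕ → ℕ) : C φ → C (φ.rename f)

lemma IsFragment.conj {C : FO A → Prop} (hC : IsFragment C) {l : List (FO A)}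
    (h : ∀ α ∈ l, C α) : C (conj l) := by
  induction l with
  | nil => exact hC.of_qf trivial
  | cons α l ih => exact hC.and (h α (by simp)) (ih fun β hβ => h β (by simp [hβ]))

lemma IsFragment.disj {C : FO A → Prop} (hC : IsFragment C) {l : List (FO A)}
    (h : ∀ α ∈ l, C α) : C (disj l) := by
  induction l with
  | nil => exact hC.of_qf trivial
  | cons α l ih => exact hC.or (h α (by simp)) (ih fun β hβ => h β (by simp [hβ]))

lemma isFragment_isSigma (i : ℕ) : IsFragment (IsSigma (A := A) i) :=
  ⟨.of_qf, .and, .or, fun f h => h.rename f⟩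

lemma isFragment_isPi (i : ℕ) : IsFragment (IsPi (A := A) i) :=
  ⟨.of_qf, .and, .or, fun f h => h.rename f⟩

section Parts

variable (W : Bool → List A)

def join : List A := W false ++ W true

def offset (b : Bool) : ℕ := bif b then (W false).length else 0

def merge (s : ℕ → Bool) (V : Bool → ℕ → ℕ) : ℕ → ℕ := fun n => offset W (s n) + V (s n) n

variable {W}

lemma getElem?_join_offset {b : Bool} {x : ℕ} (hx : x < (W b).length) :
    (join W)[offset W b + x]? = (W b)[x]? := by
  cases b
  · simpa [join, offset] using List.getElem?_append_left hx
  · simp [join, offset, List.getElem?_append_right]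

lemma offset_add_length_le (b : Bool) : offset W b + (W b).length ≤ (join W).length := by
  cases b <;> simp [join, offset]

lemma exists_lt_length_join {P : ℕ → Prop} :
    (∃ x < (join W).length, P x) ↔ ∃ b, ∃ x < (W b).length, P (offset W b + x) := by
  constructor
  · rintro ⟨x, hx, hP⟩
    by_cases h : x < (W false).length
    · exact ⟨false, x, h, by simpa [offset] using hP⟩
    · simp only [join, List.length_append] at hx
      refine ⟨true, x - (W false).length, by omega, ?_⟩
      simpa [offset, Nat.add_sub_cancel' (not_lt.mp h)] using hP
  · rintro ⟨b, x, hx, hP⟩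
    exact ⟨_, by have := offset_add_length_le (W := W) b; omega, hP⟩

lemma forall_lt_length_join {P : ℕ → Prop} :
    (∀ x < (join W).length, P x) ↔ ∀ b, ∀ x < (W b).length, P (offset W b + x) := by
  simpa only [not_exists, not_and, not_not] using
    (exists_lt_length_join (W := W) (P := fun x => ¬ P x)).not

end Parts

def SatParts (W : Bool → List A) (V : Bool → ℕ → ℕ) (p : Bool → List (FO A)) : Prop :=
  ∀ b, ∀ α ∈ p b, Sat (W b) (V b) α

def single (b : Bool) (l : List (FO A)) : Bool → List (FO A) := fun c => if c = b then l else []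

def dnfAnd (L₁ L₂ : List (Bool → List (FO A))) : List (Bool → List (FO A)) :=
  (L₁ ×ˢ L₂).map fun pq b => pq.1 b ++ pq.2 b

def negLiterals (p : Bool → List (FO A)) : List (Bool → List (FO A)) :=
  [false, true].flatMap fun b => (p b).map fun α => single b [α.not]

def dnfNot : List (Bool → List (FO A)) → List (Bool → List (FO A))
  | [] => [fun _ => []]
  | p :: L => dnfAnd (negLiterals p) (dnfNot L)

lemma forall_mem_single {P : Bool → FO A → Prop} {b : Bool} {l : List (FO A)} :
    (∀ c, ∀ β ∈ single b l c, P c β) ↔ ∀ β ∈ l, P b β := by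
  refine ⟨fun h => by simpa [single] using h b, fun h c => ?_⟩
  by_cases hc : c = b
  · subst hc; simpa [single] using h
  · simp [single, hc]

section DNF

variable {W : Bool → List A} {V : Bool → ℕ → ℕ}

lemma satParts_single {b : Bool} {l : List (FO A)} :
    SatParts W V (single b l) ↔ ∀ α ∈ l, Sat (W b) (V b) α :=
  forall_mem_single

lemma mem_of_mem_dnfAnd {L₁ L₂ : List (Bool → List (FO A))} {r : Bool → List (FO A)}
    {b : Bool} {α : FO A} (hr : r ∈ dnfAnd L₁ L₂) (hα : α ∈ r b) :
    (∃ p ∈ L₁, α ∈ p b) ∨ ∃ p ∈ L₂, α ∈ p b := by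
  obtain ⟨⟨p₁, p₂⟩, hp, rfl⟩ := List.mem_map.mp hr
  rw [List.mem_product] at hp
  exact (List.mem_append.mp hα).imp (fun h => ⟨p₁, hp.1, h⟩) (fun h => ⟨p₂, hp.2, h⟩)

lemma exists_satParts_dnfAnd {L₁ L₂ : List (Bool → List (FO A))} :
    (∃ r ∈ dnfAnd L₁ L₂, SatParts W V r) ↔
      (∃ p ∈ L₁, SatParts W V p) ∧ ∃ p ∈ L₂, SatParts W V p := by
  simp only [dnfAnd, List.mem_map, List.mem_product, Prod.exists, SatParts]
  constructor
  · rintro ⟨_, ⟨p₁, p₂, ⟨h₁, h₂⟩, rfl⟩, h⟩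
    exact ⟨⟨p₁, h₁, fun b α hα => h b α (List.mem_append_left _ hα)⟩,
      ⟨p₂, h₂, fun b α hα => h b α (List.mem_append_right _ hα)⟩⟩
  · rintro ⟨⟨p₁, h₁, hp₁⟩, ⟨p₂, h₂, hp₂⟩⟩
    exact ⟨_, ⟨p₁, p₂, ⟨h₁, h₂⟩, rfl⟩, fun b α hα =>
      (List.mem_append.mp hα).elim (hp₁ b α) (hp₂ b α)⟩

lemma exists_satParts_negLiterals {p : Bool → List (FO A)} :
    (∃ r ∈ negLiterals p, SatParts W V r) ↔ ¬ SatParts W V p := by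
  simp only [SatParts, not_forall, exists_prop, negLiterals, List.mem_flatMap, List.mem_map]
  constructor
  · rintro ⟨_, ⟨b, -, α, hα, rfl⟩, h⟩
    exact ⟨b, α, hα, by simpa using satParts_single.1 h⟩
  · rintro ⟨b, α, hα, h⟩
    exact ⟨_, ⟨b, by cases b <;> simp, α, hα, rfl⟩, satParts_single.2 (by simpa using h)⟩

lemma exists_satParts_dnfNot {L : List (Bool → List (FO A))} :
    (∃ r ∈ dnfNot L, SatParts W V r) ↔ ¬ ∃ p ∈ L, SatParts W V p := by
  induction L with
  | nil => simp [dnfNot, SatParts]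
  | cons p L ih => simp [dnfNot, exists_satParts_dnfAnd, exists_satParts_negLiterals, ih]

end DNF

lemma mem_dnfNot {L : List (Bool → List (FO A))} {r : Bool → List (FO A)} {b : Bool}
    {β : FO A} (hr : r ∈ dnfNot L) (hβ : β ∈ r b) : ∃ p ∈ L, ∃ α ∈ p b, β = α.not := by
  induction L generalizing r with
  | nil => simp_all [dnfNot]
  | cons p L ih =>
    rcases mem_of_mem_dnfAnd hr hβ with ⟨r', hr', hβ'⟩ | ⟨r', hr', hβ'⟩
    · simp only [negLiterals, List.mem_flatMap, List.mem_map] at hr'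
      obtain ⟨c, -, α, hα, rfl⟩ := hr'
      by_cases hc : b = c
      · subst hc; simp_all [single]
      · simp [single, hc] at hβ'
    · obtain ⟨q, hq, α, hα, rfl⟩ := ih hr' hβ'
      exact ⟨q, List.mem_cons_of_mem _ hq, α, hα, rfl⟩

def IsPiece (C : FO A → Prop) (q : ℕ) (F : ℕ → Prop) (s : ℕ → Bool) (b : Bool) (α : FO A) :
    Prop :=
  C α ∧ qr α ≤ q ∧ ∀ n, FreeVar α n → F n ∧ s n = b

/-- The decomposition of `φ` on a word cut into the parts `W false` and `W true`: its free
variable `n` sits in the part `W (s n)`, at position `V (s n) n` there, and `p ∈ L` stands for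
the conjunction of the formulas of `p false`, read on `W false`, and of `p true`, read on
`W true`. -/
structure Splits (C : FO A → Prop) (q : ℕ) (φ : FO A) (s : ℕ → Bool)
    (L : List (Bool → List (FO A))) : Prop where
  isPiece : ∀ p ∈ L, ∀ b, ∀ α ∈ p b, IsPiece C q (FreeVar φ) s b α
  sat_iff : ∀ (W : Bool → List A) (V : Bool → ℕ → ℕ),
    (∀ n, FreeVar φ n → V (s n) n < (W (s n)).length) →
      (Sat (join W) (merge W s V) φ ↔ ∃ p ∈ L, SatParts W V p)

section Splitting

variable {C C' : FO A → Prop} {q q' : ℕ} {φ ψ : FO A} {s : ℕ → Bool}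
  {L L₁ L₂ : List (Bool → List (FO A))}

lemma IsPiece.mono {F F' : ℕ → Prop} {b : Bool} {α : FO A} (h : IsPiece C q F s b α)
    (hC : ∀ {β}, C β → C' β) (hq : q ≤ q') (hF : ∀ n, F n → F' n) :
    IsPiece C' q' F' s b α :=
  ⟨hC h.1, h.2.1.trans hq, fun n hn => (h.2.2 n hn).imp_left (hF n)⟩

lemma Splits.mono (h : Splits C q φ s L) (hC : ∀ {β}, C β → C' β) (hq : q ≤ q') :
    Splits C' q' φ s L :=
  ⟨fun p hp b α hα => (h.isPiece p hp b α hα).mono hC hq fun _ => id, h.sat_iff⟩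

lemma Splits.and (h₁ : Splits C q φ s L₁) (h₂ : Splits C q ψ s L₂) :
    Splits C q (φ.and ψ) s (dnfAnd L₁ L₂) := by
  refine ⟨fun r hr b α hα => ?_, fun W V hV => ?_⟩
  · rcases mem_of_mem_dnfAnd hr hα with ⟨p, hp, hα⟩ | ⟨p, hp, hα⟩
    · exact (h₁.isPiece p hp b α hα).mono id le_rfl fun _ => .inl
    · exact (h₂.isPiece p hp b α hα).mono id le_rfl fun _ => .inr
  · rw [sat_and, h₁.sat_iff W V fun n hn => hV n (.inl hn),
      h₂.sat_iff W V fun n hn => hV n (.inr hn), exists_satParts_dnfAnd]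

lemma Splits.or (h₁ : Splits C q φ s L₁) (h₂ : Splits C q ψ s L₂) :
    Splits C q (φ.or ψ) s (L₁ ++ L₂) := by
  refine ⟨fun p hp b α hα => ?_, fun W V hV => ?_⟩
  · rcases List.mem_append.mp hp with hp | hp
    · exact (h₁.isPiece p hp b α hα).mono id le_rfl fun _ => .inl
    · exact (h₂.isPiece p hp b α hα).mono id le_rfl fun _ => .inr
  · rw [sat_or, h₁.sat_iff W V fun n hn => hV n (.inl hn),
      h₂.sat_iff W V fun n hn => hV n (.inr hn)]
    simp only [List.mem_append, or_and_right, exists_or]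

lemma Splits.not (hC : ∀ {β}, C β → C β.not) (h : Splits C q φ s L) :
    Splits C q φ.not s (dnfNot L) := by
  refine ⟨fun r hr b β hβ => ?_, fun W V hV => ?_⟩
  · obtain ⟨p, hp, α, hα, rfl⟩ := mem_dnfNot hr hβ
    obtain ⟨hCα, hqα, hFα⟩ := h.isPiece p hp b α hα
    exact ⟨hC hCα, hqα, hFα⟩
  · rw [sat_not, h.sat_iff W V hV, exists_satParts_dnfNot]

lemma splits_letter (a : A) (x : ℕ) (s : ℕ → Bool) :
    Splits QF 0 (letter a x) s [single (s x) [letter a x]] := by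
  refine ⟨?_, fun W V hV => ?_⟩
  · simp only [List.mem_singleton, forall_eq, forall_mem_single]
    exact ⟨trivial, le_rfl, fun n hn => ⟨hn, hn ▸ rfl⟩⟩
  · simp only [sat_letter, merge, getElem?_join_offset (hV x rfl), List.mem_singleton,
      exists_eq_left, satParts_single, forall_eq]

lemma exists_splits_lt (x y : ℕ) (s : ℕ → Bool) : ∃ L, Splits QF 0 (lt (A := A) x y) s L := by
  by_cases hxy : s x = s y
  · refine ⟨[single (s x) [lt x y]], ?_, fun W V hV => ?_⟩
    · simp only [List.mem_singleton, forall_eq, forall_mem_single]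
      exact ⟨trivial, le_rfl, fun n hn => ⟨hn, by rcases hn with rfl | rfl <;> simp [hxy]⟩⟩
    · have := offset_add_length_le (W := W) (s y)
      have := hV y (.inr rfl)
      simp only [sat_lt, merge, hxy, List.mem_singleton, exists_eq_left, satParts_single,
        forall_eq]
      omega
  · cases hx : s x <;> cases hy : s y <;> simp only [hx, hy, not_true_eq_false] at hxy
    · refine ⟨[fun _ => []], by simp, fun W V hV => iff_of_true ?_
        ⟨fun _ => [], List.mem_singleton_self _, by simp [SatParts]⟩⟩
      have hVx := hV x (.inl rfl)
      have hVy := hV y (.inr rfl)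
      rw [hx] at hVx
      rw [hy] at hVy
      simp only [sat_lt, merge, offset, join, hx, hy, cond_false, cond_true, List.length_append]
      omega
    · refine ⟨[], by simp, fun W V hV => iff_of_false ?_ (by simp)⟩
      have hVy := hV y (.inr rfl)
      rw [hy] at hVy
      simp only [sat_lt, merge, offset, hx, hy, cond_false, cond_true]
      omega

lemma QF.exists_splits (h : QF φ) (s : ℕ → Bool) : ∃ L, Splits QF 0 φ s L := by
  induction φ with
  | letter a x => exact ⟨_, splits_letter a x s⟩
  | lt x y => exact exists_splits_lt x y s
  | not φ ih =>
    obtain ⟨L, hL⟩ := ih h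
    exact ⟨_, hL.not id⟩
  | and φ ψ ih₁ ih₂ =>
    obtain ⟨L₁, h₁⟩ := ih₁ h.1
    obtain ⟨L₂, h₂⟩ := ih₂ h.2
    exact ⟨_, h₁.and h₂⟩
  | or φ ψ ih₁ ih₂ =>
    obtain ⟨L₁, h₁⟩ := ih₁ h.1
    obtain ⟨L₂, h₂⟩ := ih₂ h.2
    exact ⟨_, h₁.or h₂⟩
  | ex | all => exact h.elim

end Splitting

section Quantifiers

variable {C : FO A → Prop} {q : ℕ} {φ : FO A} {s : ℕ → Bool} {b : Bool}
  {L : List (Bool → List (FO A))} {W : Bool → List A} {V : Bool → ℕ → ℕ}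

lemma _root_.List.forall_exists_mem_and_iff {ι α : Type} {L : List α} {D : ι → Prop}
    {Q : ι → α → Prop} {R : α → Prop} :
    (∀ i, D i → ∃ a ∈ L, Q i a ∧ R a) ↔
      ∃ S ∈ L.sublists, (∀ i, D i → ∃ a ∈ S, Q i a) ∧ ∀ a ∈ S, R a := by
  classical
  constructor
  · intro h
    refine ⟨L.filter (R ·), List.mem_sublists.mpr List.filter_sublist, fun i hi => ?_,
      fun a ha => by simpa using (List.mem_filter.mp ha).2⟩
    obtain ⟨a, ha, hQ, hR⟩ := h i hi
    exact ⟨a, List.mem_filter.mpr ⟨ha, by simpa using hR⟩, hQ⟩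
  · rintro ⟨S, hS, hQ, hR⟩ i hi
    obtain ⟨a, ha, hQa⟩ := hQ i hi
    exact ⟨a, (List.mem_sublists.mp hS).subset ha, hQa, hR a ha⟩

/-- A new variable at position `x` of part `b`. The other part reads its variables through
`Nat.pred`, which makes a formula `β` there equivalent to `β.rename Nat.pred` (`sat_rename`). -/
def extend (b : Bool) (x : ℕ) (V : Bool → ℕ → ℕ) : Bool → ℕ → ℕ :=
  fun c => if c = b then cons x (V c) else V c ∘ Nat.pred

lemma merge_extend {x : ℕ} :
    merge W (cons b s) (extend b x V) = cons (offset W b + x) (merge W s V) := by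
  funext n
  cases n with
  | zero => simp [merge, extend, cons]
  | succ n => by_cases h : s n = b <;> simp [merge, extend, cons, h]

lemma satParts_extend {x : ℕ} {p : Bool → List (FO A)} :
    SatParts W (extend b x V) p ↔ (∀ α ∈ p b, Sat (W b) (cons x (V b)) α) ∧
      ∀ β ∈ p !b, Sat (W !b) (V !b) (β.rename Nat.pred) := by
  rw [SatParts, Bool.forall_bool' b]
  simp [extend, sat_rename]

lemma Splits.sat_cons_offset_iff (h : Splits C q φ (cons b s) L)
    (hV : ∀ n, FreeVar φ (n + 1) → V (s n) n < (W (s n)).length) {x : ℕ}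
    (hx : x < (W b).length) :
    Sat (join W) (cons (offset W b + x) (merge W s V)) φ ↔
      ∃ p ∈ L, (∀ α ∈ p b, Sat (W b) (cons x (V b)) α) ∧
        ∀ β ∈ p !b, Sat (W !b) (V !b) (β.rename Nat.pred) := by
  rw [← merge_extend, h.sat_iff]
  · simp only [satParts_extend]
  · rintro (_ | n) hn
    · simpa [cons, extend] using hx
    · by_cases hb : s n = b <;> simpa [cons, extend, hb] using hV n hn

def exPart (b : Bool) (p : Bool → List (FO A)) : Bool → List (FO A) :=
  fun c => if c = b then [(conj (p b)).ex] else (p c).map (rename Nat.pred)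

def allPart (b : Bool) (S : List (Bool → List (FO A))) : Bool → List (FO A) :=
  fun c => if c = b then [(disj (S.map fun p => conj (p b))).all]
    else S.flatMap fun p => (p c).map (rename Nat.pred)

lemma satParts_exPart {p : Bool → List (FO A)} :
    SatParts W V (exPart b p) ↔ Sat (W b) (V b) (conj (p b)).ex ∧
      ∀ β ∈ p !b, Sat (W !b) (V !b) (β.rename Nat.pred) := by
  rw [SatParts, Bool.forall_bool' b]
  simp [exPart]

lemma satParts_allPart {S : List (Bool → List (FO A))} :
    SatParts W V (allPart b S) ↔ Sat (W b) (V b) (disj (S.map fun p => conj (p b))).all ∧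
      ∀ p ∈ S, ∀ β ∈ p !b, Sat (W !b) (V !b) (β.rename Nat.pred) := by
  rw [SatParts, Bool.forall_bool' b]
  simp only [allPart, if_pos, Bool.not_ne_self, if_false, List.mem_singleton, forall_eq,
    List.mem_flatMap, List.mem_map]
  grind

lemma Splits.exists_lt_length_iff (h : Splits C q φ (cons b s) L)
    (hV : ∀ n, FreeVar φ (n + 1) → V (s n) n < (W (s n)).length) :
    (∃ x < (W b).length, Sat (join W) (cons (offset W b + x) (merge W s V)) φ) ↔
      ∃ p ∈ L, SatParts W V (exPart b p) := by
  simp only [satParts_exPart, sat_ex, sat_conj]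
  constructor
  · rintro ⟨x, hx, hsat⟩
    obtain ⟨p, hp, hA, hB⟩ := (h.sat_cons_offset_iff hV hx).1 hsat
    exact ⟨p, hp, ⟨x, hx, hA⟩, hB⟩
  · rintro ⟨p, hp, ⟨x, hx, hA⟩, hB⟩
    exact ⟨x, hx, (h.sat_cons_offset_iff hV hx).2 ⟨p, hp, hA, hB⟩⟩

lemma Splits.forall_lt_length_iff (h : Splits C q φ (cons b s) L)
    (hV : ∀ n, FreeVar φ (n + 1) → V (s n) n < (W (s n)).length) :
    (∀ x < (W b).length, Sat (join W) (cons (offset W b + x) (merge W s V)) φ) ↔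
      ∃ S ∈ L.sublists, SatParts W V (allPart b S) := by
  refine (forall₂_congr fun (x : ℕ) (hx : x < (W b).length) =>
    h.sat_cons_offset_iff hV hx).trans ?_
  rw [List.forall_exists_mem_and_iff]
  simp [satParts_allPart]

end Quantifiers

section Pieces

variable {C : FO A → Prop} {q : ℕ} {φ : FO A} {s : ℕ → Bool} {b : Bool} {F : ℕ → Prop}

lemma IsPiece.rename_pred (hC : IsFragment C) {c : Bool} {β : FO A}
    (h : IsPiece C q F (cons b s) c β) (hc : c ≠ b) :
    IsPiece C (q + 1) (fun n => F (n + 1)) s c (β.rename Nat.pred) := by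
  refine ⟨hC.rename _ h.1, by rw [qr_rename]; exact h.2.1.trans q.le_succ, fun n hn => ?_⟩
  obtain ⟨_ | m, hm, rfl⟩ := freeVar_rename hn
  · exact absurd (h.2.2 0 hm).2.symm hc
  · exact h.2.2 (m + 1) hm

lemma isPiece_conj_of_succ {l : List (FO A)} (h : ∀ α ∈ l, IsPiece C q F (cons b s) b α)
    {n : ℕ} (hn : FreeVar (conj l) (n + 1)) : F (n + 1) ∧ s n = b := by
  obtain h0 | ⟨α, hα, hn⟩ := freeVar_conj hn
  · exact absurd h0 n.succ_ne_zero
  · exact (h α hα).2.2 (n + 1) hn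

lemma isPiece_exPart (hC : IsFragment C) (hex : ∀ {α}, C α → C α.ex)
    {p : Bool → List (FO A)} (h : ∀ c, ∀ α ∈ p c, IsPiece C q F (cons b s) c α) :
    ∀ c, ∀ α ∈ exPart b p c, IsPiece C (q + 1) (fun n => F (n + 1)) s c α := by
  intro c α hα
  by_cases hc : c = b
  · subst hc
    obtain rfl : α = (conj (p c)).ex := by simpa [exPart] using hα
    exact ⟨hex (hC.conj fun α hα => (h c α hα).1),
      Nat.succ_le_succ (qr_conj_le fun α hα => (h c α hα).2.1),
      fun n hn => isPiece_conj_of_succ (h c) hn⟩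
  · obtain ⟨β, hβ, rfl⟩ : ∃ β ∈ p c, β.rename Nat.pred = α := by simpa [exPart, hc] using hα
    exact (h c β hβ).rename_pred hC hc

lemma isPiece_allPart (hC : IsFragment C) (hall : ∀ {α}, C α → C α.all)
    {S : List (Bool → List (FO A))}
    (h : ∀ p ∈ S, ∀ c, ∀ α ∈ p c, IsPiece C q F (cons b s) c α) :
    ∀ c, ∀ α ∈ allPart b S c, IsPiece C (q + 1) (fun n => F (n + 1)) s c α := by
  intro c α hα
  by_cases hc : c = b
  · subst hc
    obtain rfl : α = (disj (S.map fun p => conj (p c))).all := by simpa [allPart] using hα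
    refine ⟨hall (hC.disj ?_), Nat.succ_le_succ (qr_disj_le ?_), fun n hn => ?_⟩
    · simpa using fun p hp => hC.conj fun α hα => (h p hp c α hα).1
    · simpa using fun p hp => qr_conj_le fun α hα => (h p hp c α hα).2.1
    · obtain h0 | ⟨_, hψ, hn⟩ := freeVar_disj hn
      · exact absurd h0 n.succ_ne_zero
      · obtain ⟨p, hp, rfl⟩ := List.mem_map.mp hψ
        exact isPiece_conj_of_succ (h p hp c) hn
  · obtain ⟨p, hp, β, hβ, rfl⟩ : ∃ p ∈ S, ∃ β ∈ p c, β.rename Nat.pred = α := by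
      simpa [allPart, hc] using hα
    exact (h p hp c β hβ).rename_pred hC hc

lemma Splits.ex (hC : IsFragment C) (hex : ∀ {α}, C α → C α.ex)
    {L : Bool → List (Bool → List (FO A))} (h : ∀ b, Splits C q φ (cons b s) (L b)) :
    Splits C (q + 1) φ.ex s ([false, true].flatMap fun b => (L b).map (exPart b)) := by
  refine ⟨?_, fun W V hV => ?_⟩
  · simp only [List.mem_flatMap, List.mem_map]
    rintro _ ⟨b, -, p, hp, rfl⟩
    exact isPiece_exPart hC hex ((h b).isPiece p hp)
  · rw [sat_ex, exists_lt_length_join]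
    simp only [(h _).exists_lt_length_iff hV]
    simp [or_and_right, exists_or]

lemma Splits.all (hC : IsFragment C) (hall : ∀ {α}, C α → C α.all)
    {L : Bool → List (Bool → List (FO A))} (h : ∀ b, Splits C q φ (cons b s) (L b)) :
    Splits C (q + 1) φ.all s
      (dnfAnd ((L false).sublists.map (allPart false)) ((L true).sublists.map (allPart true))) := by
  have hpiece : ∀ b, ∀ r ∈ (L b).sublists.map (allPart b), ∀ c, ∀ α ∈ r c,
      IsPiece C (q + 1) (FreeVar φ.all) s c α := by
    simp only [List.mem_map, List.mem_sublists]
    rintro b _ ⟨S, hS, rfl⟩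
    exact isPiece_allPart hC hall fun p hp => (h b).isPiece p (hS.subset hp)
  refine ⟨fun r hr c α hα => ?_, fun W V hV => ?_⟩
  · rcases mem_of_mem_dnfAnd hr hα with ⟨p, hp, hα⟩ | ⟨p, hp, hα⟩
    exacts [hpiece false p hp c α hα, hpiece true p hp c α hα]
  · rw [sat_all, forall_lt_length_join, Bool.forall_bool, (h false).forall_lt_length_iff hV,
      (h true).forall_lt_length_iff hV, exists_satParts_dnfAnd]
    simp

end Pieces

mutual

theorem IsSigma.exists_splits {i : ℕ} {φ : FO A} (h : IsSigma i φ) (s : ℕ → Bool) :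
    ∃ L, Splits (IsSigma i) (qr φ) φ s L :=
  match h with
  | .of_qf h =>
    let ⟨L, hL⟩ := h.exists_splits s
    ⟨L, hL.mono .of_qf (Nat.zero_le _)⟩
  | .of_pi h =>
    let ⟨L, hL⟩ := h.exists_splits s
    ⟨L, hL.mono .of_pi le_rfl⟩
  | .and h₁ h₂ =>
    let ⟨_, hL₁⟩ := h₁.exists_splits s
    let ⟨_, hL₂⟩ := h₂.exists_splits s
    ⟨_, (hL₁.mono id (le_max_left _ _)).and (hL₂.mono id (le_max_right _ _))⟩
  | .or h₁ h₂ =>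
    let ⟨_, hL₁⟩ := h₁.exists_splits s
    let ⟨_, hL₂⟩ := h₂.exists_splits s
    ⟨_, (hL₁.mono id (le_max_left _ _)).or (hL₂.mono id (le_max_right _ _))⟩
  | .ex h =>
    let ⟨_, hL⟩ := Classical.skolem.mp fun b => h.exists_splits (cons b s)
    ⟨_, Splits.ex (isFragment_isSigma _) .ex hL⟩

theorem IsPi.exists_splits {i : ℕ} {φ : FO A} (h : IsPi i φ) (s : ℕ → Bool) :
    ∃ L, Splits (IsPi i) (qr φ) φ s L :=
  match h with
  | .of_qf h =>
    let ⟨L, hL⟩ := h.exists_splits s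
    ⟨L, hL.mono .of_qf (Nat.zero_le _)⟩
  | .of_sigma h =>
    let ⟨L, hL⟩ := h.exists_splits s
    ⟨L, hL.mono .of_sigma le_rfl⟩
  | .and h₁ h₂ =>
    let ⟨_, hL₁⟩ := h₁.exists_splits s
    let ⟨_, hL₂⟩ := h₂.exists_splits s
    ⟨_, (hL₁.mono id (le_max_left _ _)).and (hL₂.mono id (le_max_right _ _))⟩
  | .or h₁ h₂ =>
    let ⟨_, hL₁⟩ := h₁.exists_splits s
    let ⟨_, hL₂⟩ := h₂.exists_splits s
    ⟨_, (hL₁.mono id (le_max_left _ _)).or (hL₂.mono id (le_max_right _ _))⟩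
  | .all h =>
    let ⟨_, hL⟩ := Classical.skolem.mp fun b => h.exists_splits (cons b s)
    ⟨_, Splits.all (isFragment_isPi _) .all hL⟩

end

variable {i k : ℕ}

lemma sle_refl (w : List A) : sle i k w w := fun _ _ _ _ => id

lemma sle.trans {w₁ w₂ w₃ : List A} (h₁₂ : sle i k w₁ w₂) (h₂₃ : sle i k w₂ w₃) :
    sle i k w₁ w₃ :=
  fun φ hφ hk hs h => h₂₃ φ hφ hk hs (h₁₂ φ hφ hk hs h)

theorem sle.append {w₁ w₂ w₁' w₂' : List A} (h : sle i k w₁ w₂) (h' : sle i k w₁' w₂') :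
    sle i k (w₁ ++ w₁') (w₂ ++ w₂') := by
  intro φ hφ hk hφs hsat
  obtain ⟨L, hL⟩ := hφ.exists_splits fun _ => false
  have hfree := isSentence_iff.mp hφs
  have hsat_iff (W : Bool → List A) :
      Sat (join W) (fun _ => 0) φ ↔ ∃ p ∈ L, SatParts W (fun _ _ => 0) p :=
    hL.sat_iff W (fun _ _ => 0) fun n hn => (hfree n hn).elim
  obtain ⟨p, hp, hsatp⟩ := (hsat_iff fun b => bif b then w₁' else w₁).mp hsat
  refine (hsat_iff fun b => bif b then w₂' else w₂).mpr ⟨p, hp, fun b α hα => ?_⟩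
  obtain ⟨hC, hqr, hFα⟩ := hL.isPiece p hp b α hα
  have hα_sentence : IsSentence α := isSentence_iff.mpr fun n hn => hfree n (hFα n hn).1
  cases b
  · exact h α hC (hqr.trans hk) hα_sentence (hsatp false α hα)
  · exact h' α hC (hqr.trans hk) hα_sentence (hsatp true α hα)

end FO

/-- For each level `i` and rank `k`, the relation `≤ᵏᵢ` (every `Σᵢ` sentence of
quantifier rank at most `k` satisfied by `w` is satisfied by `w'`) is a preorder
compatible with concatenation of words. -/
theorem sle_preorder_and_concat_compatible {A : Type} [Fintype A] (i k : ℕ) :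
    (∀ w : List A, FO.sle i k w w) ∧
    (∀ w₁ w₂ w₃ : List A, FO.sle i k w₁ w₂ → FO.sle i k w₂ w₃ → FO.sle i k w₁ w₃) ∧
    (∀ w₁ w₂ w₁' w₂' : List A, FO.sle i k w₁ w₂ → FO.sle i k w₁' w₂' →
      FO.sle i k (w₁ ++ w₁') (w₂ ++ w₂')) :=
  ⟨FO.sle_refl, fun _ _ _ => FO.sle.trans, fun _ _ _ _ => FO.sle.append⟩
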